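/- Round-repetition upper bound for maximization (core of the appendix Lemma, maximization version). Let I be a nonempty finite set, p a probability distribution on I, r ≥ 1 and b natural numbers, M ≥ 0 and t real. Equip I^r with the product measure p^r. Let B : I^r → Fin (2^b) be an arbitrary function, and for each 1 ≤ i ≤ r let G_i : I^{i−1} × Fin (2^b) × I → ℝ satisfy 0 ≤ G_i(h,a,x) ≤ M for all arguments and Σ_{x ∈ I} p(x)·G_i(h,a,x) ≤ t for every h ∈ I^{i−1} and a ∈ Fin (2^b). Then E_{σ ∼ p^r}[ Σ_{i=1}^r G_i( (σ₁,…,σ_{i−1}), B(σ), σ_i ) ] ≤ r · ( t + 2M·√(b/r) ). -/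

import Mathlib

/-!
Chernoff bound with a union bound over the advice. Replace `t` by `min t M` and put
`λ = s / M` with `s = √(b / r)`. By convexity of `exp` on `[0, M]`, every round has conditional
moment generating function `∑ₓ p x · exp (λ Gᵢ) ≤ C := exp ((t / M) (eˢ - 1))`. For a fixed advice
string `a`, resampling the rounds one at a time from the last one (whose input the earlier rounds
never see) gives `E [∏ᵢ exp (λ Gᵢ(·, a, ·))] ≤ Cʳ`. Since `B σ` is one of `2ᵇ` strings, Jensen and
a union bound give `exp (λ E [∑ᵢ Gᵢ]) ≤ 2ᵇ Cʳ`; taking logarithms and using `eˢ - 1 ≤ s + s²`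
yields the claim. The cases `b = 0` (linearity of expectation), `M = 0` and `b > r` (the trivial
bound `r M`) are treated separately.
-/

open Finset Function Real

theorem prod_update_mul {ι I M : Type*} [Fintype ι] [DecidableEq ι] [CommMonoid M]
    (p : I → M) (σ : ι → I) (K : ι) (x : I) :
    (∏ j, p (update σ K x j)) * p (σ K) = (∏ j, p (σ j)) * p x := by
  rw [Fintype.prod_eq_mul_prod_compl K, Fintype.prod_eq_mul_prod_compl K (fun j => p (σ j)),
    update_self, prod_congr rfl fun j hj => by rw [update_of_ne (by simpa using hj)]]
  ac_rfl

section PiExpect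

variable {ι I : Type*} [Fintype ι] [DecidableEq ι] [Fintype I] {p : I → ℝ}

variable (p) in
noncomputable def piExpect (f : (ι → I) → ℝ) : ℝ :=
  ∑ σ, (∏ j, p (σ j)) * f σ

theorem sum_pi_prod_eq_one (hp1 : ∑ x, p x = 1) : ∑ σ : ι → I, ∏ j, p (σ j) = 1 := by
  rw [← Fintype.prod_sum (fun _ x => p x), hp1, prod_const_one]

theorem piExpect_const (hp1 : ∑ x, p x = 1) (c : ℝ) : piExpect p (fun _ : ι → I => c) = c := by
  rw [piExpect, ← sum_mul, sum_pi_prod_eq_one hp1, one_mul]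

theorem piExpect_mono (hp0 : ∀ x, 0 ≤ p x) {f g : (ι → I) → ℝ} (hfg : ∀ σ, f σ ≤ g σ) :
    piExpect p f ≤ piExpect p g :=
  sum_le_sum fun σ _ => mul_le_mul_of_nonneg_left (hfg σ) (prod_nonneg fun _ _ => hp0 _)

theorem piExpect_sum {κ : Type*} (s : Finset κ) (f : κ → (ι → I) → ℝ) :
    piExpect p (fun σ => ∑ k ∈ s, f k σ) = ∑ k ∈ s, piExpect p (f k) := by
  simp only [piExpect, mul_sum]
  exact sum_comm

theorem piExpect_const_mul (c : ℝ) (f : (ι → I) → ℝ) :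
    piExpect p (fun σ => c * f σ) = c * piExpect p f := by
  simp only [piExpect, mul_sum, mul_left_comm c]

theorem exp_piExpect_le (hp0 : ∀ x, 0 ≤ p x) (hp1 : ∑ x, p x = 1) (f : (ι → I) → ℝ) :
    exp (piExpect p f) ≤ piExpect p (fun σ => exp (f σ)) := by
  simp only [piExpect]
  simpa only [smul_eq_mul] using convexOn_exp.map_sum_le (fun σ _ => prod_nonneg fun _ _ => hp0 _)
    (sum_pi_prod_eq_one hp1) (fun σ _ => Set.mem_univ (f σ))

theorem piExpect_eq_resample (hp1 : ∑ x, p x = 1) (K : ι) (f : (ι → I) → ℝ) :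
    piExpect p f = piExpect p (fun σ => ∑ x, p x * f (update σ K x)) := by
  have he : Bijective fun q : (ι → I) × I => (update q.1 K q.2, q.1 K) :=
    Involutive.bijective fun q => by simp
  symm
  calc piExpect p (fun σ => ∑ x, p x * f (update σ K x))
      = ∑ q : (ι → I) × I, (∏ j, p (q.1 j)) * p q.2 * f (update q.1 K q.2) := by
        simp only [piExpect, mul_sum, Fintype.sum_prod_type, mul_assoc]
    _ = ∑ q : (ι → I) × I, (∏ j, p (q.1 j)) * p q.2 * f q.1 :=
        Fintype.sum_bijective _ he _ _ fun q => by rw [prod_update_mul]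
    _ = piExpect p f := by
        simp only [Fintype.sum_prod_type, mul_right_comm _ (p _), ← mul_sum, hp1, mul_one, piExpect]

theorem piExpect_mul_le (hp0 : ∀ x, 0 ≤ p x) (hp1 : ∑ x, p x = 1) {K : ι}
    {F φ : (ι → I) → ℝ} {C : ℝ} (hF0 : ∀ σ, 0 ≤ F σ) (hF : ∀ σ x, F (update σ K x) = F σ)
    (hφ : ∀ σ, ∑ x, p x * φ (update σ K x) ≤ C) :
    piExpect p (fun σ => F σ * φ σ) ≤ C * piExpect p F := by
  rw [piExpect_eq_resample hp1 K, ← piExpect_const_mul]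
  refine piExpect_mono hp0 fun σ => ?_
  simp only [hF, mul_left_comm (p _), ← mul_sum, mul_comm C]
  exact mul_le_mul_of_nonneg_left (hφ σ) (hF0 σ)

theorem piExpect_le_of_le (hp0 : ∀ x, 0 ≤ p x) (hp1 : ∑ x, p x = 1) {f : (ι → I) → ℝ} {c : ℝ}
    (hf : ∀ σ, f σ ≤ c) : piExpect p f ≤ c :=
  (piExpect_mono hp0 hf).trans_eq (piExpect_const hp1 c)

theorem piExpect_le_of_resample_le (hp0 : ∀ x, 0 ≤ p x) (hp1 : ∑ x, p x = 1) (K : ι)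
    {φ : (ι → I) → ℝ} {C : ℝ} (hφ : ∀ σ, ∑ x, p x * φ (update σ K x) ≤ C) :
    piExpect p φ ≤ C :=
  (piExpect_eq_resample hp1 K φ).trans_le (piExpect_le_of_le hp0 hp1 hφ)

end PiExpect

section Rounds

variable {I : Type*} {r : ℕ}

def history (σ : Fin r → I) (i : Fin r) : {j : Fin r // j < i} → I := fun j => σ j

theorem history_update_of_le {i K : Fin r} (hiK : i ≤ K) (σ : Fin r → I) (x : I) :
    history (update σ K x) i = history σ i :=
  funext fun j => update_of_ne (j.2.trans_le hiK).ne _ _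

variable [Fintype I] {p : I → ℝ}

theorem piExpect_sum_rounds_le (hp0 : ∀ x, 0 ≤ p x) (hp1 : ∑ x, p x = 1)
    (g : ∀ i : Fin r, ({j : Fin r // j < i} → I) → I → ℝ) {t : ℝ}
    (hg : ∀ i h, ∑ x, p x * g i h x ≤ t) :
    piExpect p (fun σ => ∑ i, g i (history σ i) (σ i)) ≤ r * t := by
  rw [piExpect_sum]
  calc ∑ i, piExpect p (fun σ => g i (history σ i) (σ i))
      ≤ ∑ _i : Fin r, t := sum_le_sum fun i _ => piExpect_le_of_resample_le hp0 hp1 i fun σ => by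
        simpa [history_update_of_le le_rfl] using hg i (history σ i)
    _ = r * t := by simp

theorem piExpect_prod_rounds_le (hp0 : ∀ x, 0 ≤ p x) (hp1 : ∑ x, p x = 1)
    (g : ∀ i : Fin r, ({j : Fin r // j < i} → I) → I → ℝ) (hg0 : ∀ i h x, 0 ≤ g i h x)
    {C : ℝ} (hC0 : 0 ≤ C) (hC : ∀ i h, ∑ x, p x * g i h x ≤ C) :
    piExpect p (fun σ => ∏ i, g i (history σ i) (σ i)) ≤ C ^ r := by
  suffices ∀ s : Finset (Fin r), piExpect p (fun σ => ∏ i ∈ s, g i (history σ i) (σ i)) ≤ C ^ #s by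
    simpa using this univ
  intro s
  induction s using Finset.induction_on_max with
  | empty => simp [piExpect_const hp1]
  | insert a s hlt ih =>
    rw [card_insert_of_notMem fun ha => (hlt a ha).false, pow_succ']
    simp only [prod_insert fun ha => (hlt a ha).false, mul_comm (g a _ _)]
    refine (piExpect_mul_le hp0 hp1 (K := a) (fun σ => prod_nonneg fun i _ => hg0 _ _ _)
      (fun σ x => prod_congr rfl fun i hi => ?_) fun σ => ?_).trans
      (mul_le_mul_of_nonneg_left ih hC0)
    · rw [history_update_of_le (hlt i hi).le, update_of_ne (hlt i hi).ne]
    · simpa [history_update_of_le le_rfl] using hC a (history σ a)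

theorem exp_piExpect_sum_rounds_le {A : Type*} [Fintype A] (hp0 : ∀ x, 0 ≤ p x)
    (hp1 : ∑ x, p x = 1) (B : (Fin r → I) → A)
    (g : ∀ i : Fin r, ({j : Fin r // j < i} → I) → A → I → ℝ) {C : ℝ} (hC0 : 0 ≤ C)
    (hC : ∀ i h a, ∑ x, p x * exp (g i h a x) ≤ C) :
    exp (piExpect p (fun σ => ∑ i, g i (history σ i) (B σ) (σ i))) ≤ Fintype.card A * C ^ r := by
  calc exp (piExpect p (fun σ => ∑ i, g i (history σ i) (B σ) (σ i)))
      ≤ piExpect p (fun σ => ∏ i, exp (g i (history σ i) (B σ) (σ i))) := by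
        simpa only [exp_sum] using
          exp_piExpect_le hp0 hp1 fun σ => ∑ i, g i (history σ i) (B σ) (σ i)
    _ ≤ piExpect p (fun σ => ∑ a, ∏ i, exp (g i (history σ i) a (σ i))) :=
        piExpect_mono hp0 fun σ =>
          single_le_sum (f := fun a => ∏ i, exp (g i (history σ i) a (σ i)))
            (fun _ _ => prod_nonneg fun _ _ => (exp_pos _).le) (mem_univ (B σ))
    _ = ∑ a, piExpect p (fun σ => ∏ i, exp (g i (history σ i) a (σ i))) := piExpect_sum _ _
    _ ≤ ∑ _a : A, C ^ r := sum_le_sum fun a _ =>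
        piExpect_prod_rounds_le hp0 hp1 _ (fun _ _ _ => (exp_pos _).le) hC0 fun i h => hC i h a
    _ = Fintype.card A * C ^ r := by simp

end Rounds

theorem exp_mul_le_one_add {M y : ℝ} (hM : 0 < M) (hy0 : 0 ≤ y) (hyM : y ≤ M) (l : ℝ) :
    exp (l * y) ≤ 1 + y / M * (exp (l * M) - 1) := by
  have hθ : y / M ≤ 1 := (div_le_one hM).2 hyM
  have := convexOn_exp.2 (Set.mem_univ 0) (Set.mem_univ (l * M)) (sub_nonneg.2 hθ)
    (div_nonneg hy0 hM.le) (sub_add_cancel _ _)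
  simp only [smul_eq_mul, mul_zero, zero_add, exp_zero, mul_one] at this
  calc exp (l * y) = exp (y / M * (l * M)) := by field_simp
    _ ≤ 1 - y / M + y / M * exp (l * M) := this
    _ = 1 + y / M * (exp (l * M) - 1) := by ring

theorem sum_mul_exp_le {I : Type*} [Fintype I] {p g : I → ℝ} {M t l : ℝ}
    (hp0 : ∀ x, 0 ≤ p x) (hp1 : ∑ x, p x = 1) (hM : 0 < M) (hl : 0 ≤ l)
    (hg0 : ∀ x, 0 ≤ g x) (hgM : ∀ x, g x ≤ M) (hgt : ∑ x, p x * g x ≤ t) :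
    ∑ x, p x * exp (l * g x) ≤ exp (t / M * (exp (l * M) - 1)) := by
  have hexp : 0 ≤ exp (l * M) - 1 := sub_nonneg.2 (one_le_exp (mul_nonneg hl hM.le))
  calc ∑ x, p x * exp (l * g x)
      ≤ ∑ x, p x * (1 + g x / M * (exp (l * M) - 1)) := sum_le_sum fun x _ =>
        mul_le_mul_of_nonneg_left (exp_mul_le_one_add hM (hg0 x) (hgM x) l) (hp0 x)
    _ = 1 + (∑ x, p x * g x) / M * (exp (l * M) - 1) := by
        simp only [mul_add, mul_one, sum_add_distrib, hp1, sum_div, sum_mul, mul_div_assoc,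
          mul_assoc]
    _ ≤ 1 + t / M * (exp (l * M) - 1) := by gcongr
    _ ≤ exp (t / M * (exp (l * M) - 1)) := by linarith [add_one_le_exp (t / M * (exp (l * M) - 1))]

theorem mul_piExpect_sum_rounds_le {I A : Type*} [Fintype I] [Fintype A] [Nonempty A]
    {p : I → ℝ} {r : ℕ} {M t l : ℝ} (hp0 : ∀ x, 0 ≤ p x) (hp1 : ∑ x, p x = 1)
    (hM : 0 < M) (hl : 0 ≤ l) (B : (Fin r → I) → A)
    (G : ∀ i : Fin r, ({j : Fin r // j < i} → I) → A → I → ℝ)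
    (hG0 : ∀ i h a x, 0 ≤ G i h a x) (hGM : ∀ i h a x, G i h a x ≤ M)
    (hGt : ∀ i h a, ∑ x, p x * G i h a x ≤ t) :
    l * piExpect p (fun σ => ∑ i, G i (history σ i) (B σ) (σ i))
      ≤ log (Fintype.card A) + r * (t / M * (exp (l * M) - 1)) := by
  have hA : (0 : ℝ) < Fintype.card A := Nat.cast_pos.2 Fintype.card_pos
  rw [← exp_le_exp, exp_add, exp_log hA, exp_nat_mul]
  calc exp (l * piExpect p (fun σ => ∑ i, G i (history σ i) (B σ) (σ i)))
      = exp (piExpect p (fun σ => ∑ i, l * G i (history σ i) (B σ) (σ i))) := by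
        rw [← piExpect_const_mul]
        simp only [mul_sum]
    _ ≤ Fintype.card A * exp (t / M * (exp (l * M) - 1)) ^ r :=
        exp_piExpect_sum_rounds_le hp0 hp1 B _ (exp_pos _).le fun i h a =>
          sum_mul_exp_le hp0 hp1 hM hl (hG0 i h a) (hGM i h a) (hGt i h a)

theorem piExpect_sum_rounds_le_of_pos_of_le {I : Type*} [Fintype I] {p : I → ℝ} {r b : ℕ}
    {M t : ℝ} (hp0 : ∀ x, 0 ≤ p x) (hp1 : ∑ x, p x = 1) (hM : 0 < M) (ht0 : 0 ≤ t)
    (htM : t ≤ M) (hb : 0 < b) (hbr : b ≤ r) (B : (Fin r → I) → Fin (2 ^ b))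
    (G : ∀ i : Fin r, ({j : Fin r // j < i} → I) → Fin (2 ^ b) → I → ℝ)
    (hG0 : ∀ i h a x, 0 ≤ G i h a x) (hGM : ∀ i h a x, G i h a x ≤ M)
    (hGt : ∀ i h a, ∑ x, p x * G i h a x ≤ t) :
    piExpect p (fun σ => ∑ i, G i (history σ i) (B σ) (σ i))
      ≤ r * (t + 2 * M * √(b / r)) := by
  set s := √(b / r)
  have hr : (0 : ℝ) < r := by exact_mod_cast hb.trans_le hbr
  have hs0 : 0 < s := sqrt_pos.2 (by positivity)
  have hs1 : s ≤ 1 := sqrt_le_one.2 ((div_le_one hr).2 (by exact_mod_cast hbr))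
  have hbs : (b : ℝ) = s ^ 2 * r := by rw [sq_sqrt (by positivity), div_mul_cancel₀ _ hr.ne']
  have hexp : exp s - 1 ≤ s + s ^ 2 := by
    have := abs_exp_sub_one_sub_id_le (x := s) (by rwa [abs_of_pos hs0])
    linarith [le_abs_self (exp s - 1 - s)]
  have hlog : log 2 ≤ 1 := by linarith [log_two_lt_d9]
  have hmgf := mul_piExpect_sum_rounds_le hp0 hp1 hM (div_pos hs0 hM).le B G hG0 hGM hGt
  rw [Fintype.card_fin, Nat.cast_pow, Nat.cast_ofNat, log_pow, div_mul_cancel₀ _ hM.ne'] at hmgf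
  refine le_of_mul_le_mul_left (hmgf.trans ?_) (div_pos hs0 hM)
  calc b * log 2 + r * (t / M * (exp s - 1))
      ≤ b + r * (t / M * (s + s ^ 2)) :=
        add_le_add (mul_le_of_le_one_right b.cast_nonneg hlog) (by gcongr)
    _ ≤ s / M * (r * (t + 2 * M * s)) := by
        rw [hbs]
        field_simp
        nlinarith [mul_le_mul_of_nonneg_left htM hs0.le]

theorem piExpect_sum_rounds_le_of_nonneg_of_le {I : Type*} [Fintype I] {p : I → ℝ}
    {r b : ℕ} {M t : ℝ} (hp0 : ∀ x, 0 ≤ p x) (hp1 : ∑ x, p x = 1) (hr : 0 < r) (hM : 0 ≤ M)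
    (ht0 : 0 ≤ t) (htM : t ≤ M) (B : (Fin r → I) → Fin (2 ^ b))
    (G : ∀ i : Fin r, ({j : Fin r // j < i} → I) → Fin (2 ^ b) → I → ℝ)
    (hG0 : ∀ i h a x, 0 ≤ G i h a x) (hGM : ∀ i h a x, G i h a x ≤ M)
    (hGt : ∀ i h a, ∑ x, p x * G i h a x ≤ t) :
    piExpect p (fun σ => ∑ i, G i (history σ i) (B σ) (σ i))
      ≤ r * (t + 2 * M * √(b / r)) := by
  have htrivial : piExpect p (fun σ => ∑ i, G i (history σ i) (B σ) (σ i)) ≤ r * M :=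
    piExpect_le_of_le hp0 hp1 fun σ =>
      (sum_le_sum fun i _ => hGM i (history σ i) (B σ) (σ i)).trans_eq (by simp)
  obtain rfl | hb := Nat.eq_zero_or_pos b
  · have hB (σ : Fin r → I) : B σ = 0 := Fin.ext (by omega)
    simp only [hB, CharP.cast_eq_zero, zero_div, sqrt_zero, mul_zero, add_zero]
    exact piExpect_sum_rounds_le hp0 hp1 _ fun i h => hGt i h 0
  obtain rfl | hM0 := hM.eq_or_lt
  · simpa using htrivial.trans (by gcongr)
  obtain hbr | hrb := le_or_gt b r
  · exact piExpect_sum_rounds_le_of_pos_of_le hp0 hp1 hM0 ht0 htM hb hbr B G hG0 hGM hGt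
  · have hs : 1 ≤ √((b : ℝ) / r) :=
      one_le_sqrt.2 ((one_le_div (by positivity)).2 (by exact_mod_cast hrb.le))
    refine htrivial.trans (mul_le_mul_of_nonneg_left ?_ (Nat.cast_nonneg r))
    nlinarith

theorem round_repetition_upper
    {I : Type*} [Fintype I] [Nonempty I]
    (p : I → ℝ) (hp0 : ∀ x, 0 ≤ p x) (hp1 : ∑ x, p x = 1)
    {r b : ℕ} (hr : 1 ≤ r) (M t : ℝ) (hM : 0 ≤ M)
    (B : (Fin r → I) → Fin (2 ^ b))
    (G : ∀ i : Fin r, ({j : Fin r // j < i} → I) → Fin (2 ^ b) → I → ℝ)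
    (hG0 : ∀ i h a x, 0 ≤ G i h a x) (hGM : ∀ i h a x, G i h a x ≤ M)
    (hGt : ∀ i h a, (∑ x, p x * G i h a x) ≤ t) :
    ∑ σ : Fin r → I, (∏ j, p (σ j)) * ∑ i, G i (fun j => σ j.1) (B σ) (σ i)
      ≤ (r : ℝ) * (t + 2 * M * Real.sqrt ((b : ℝ) / (r : ℝ))) := by
  have hGt' (i h a) : ∑ x, p x * G i h a x ≤ min t M := by
    refine le_min (hGt i h a) ?_
    calc ∑ x, p x * G i h a x ≤ ∑ x, p x * M :=
          sum_le_sum fun x _ => mul_le_mul_of_nonneg_left (hGM i h a x) (hp0 x)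
      _ = M := by rw [← sum_mul, hp1, one_mul]
  have ht0 : 0 ≤ min t M := (sum_nonneg fun x _ => mul_nonneg (hp0 x) (hG0 _ _ _ _)).trans
    (hGt' ⟨0, hr⟩ (fun _ => Classical.arbitrary I) 0)
  calc piExpect p (fun σ => ∑ i, G i (history σ i) (B σ) (σ i))
      ≤ r * (min t M + 2 * M * √(b / r)) :=
        piExpect_sum_rounds_le_of_nonneg_of_le hp0 hp1 hr hM ht0 (min_le_right t M) B G hG0 hGM hGt'
    _ ≤ r * (t + 2 * M * √(b / r)) := by gcongr; exact min_le_left t M
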